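/- Lfg coalgebras are closed under quotients: if q : (X,x) ↠ (Y,y) is a coalgebra homomorphism carried by a strong epimorphism and (X,x) is lfg, then (Y,y) is lfg. -/

import Mathlib

open CategoryTheory CategoryTheory.Limits

universe v u

namespace LFF

variable {C : Type u} [Category.{v} C]

/-- An object is finitely presentable if its hom-functor preserves filtered colimits. -/
def IsFP (X : C) : Prop :=
  ∀ (J : Type v) [SmallCategory J] [IsFiltered J] (F : J ⥤ C)
    (c : Cocone F), Nonempty (IsColimit c) →
    Nonempty (IsColimit ((coyoneda.obj (Opposite.op X)).mapCocone c))

/-- An object is finitely generated if its hom-functor preserves filtered colimits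
of diagrams all of whose connecting morphisms are monomorphisms. -/
def IsFG (X : C) : Prop :=
  ∀ (J : Type v) [SmallCategory J] [IsFiltered J] (F : J ⥤ C),
    (∀ ⦃i j : J⦄ (f : i ⟶ j), Mono (F.map f)) →
    ∀ (c : Cocone F), Nonempty (IsColimit c) →
    Nonempty (IsColimit ((coyoneda.obj (Opposite.op X)).mapCocone c))

/-- A category is locally finitely presentable if it is cocomplete, the finitely
presentable objects are essentially small, and every object is a filtered colimit
of finitely presentable objects. -/
def IsLFP (C : Type u) [Category.{v} C] : Prop :=
  HasColimits C ∧
  EssentiallySmall.{v} (ObjectProperty.FullSubcategory (fun X : C => IsFP X)) ∧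
  ∀ X : C, ∃ (J : Type v) (_ : SmallCategory J) (_ : IsFiltered J)
    (F : J ⥤ C) (c : Cocone F),
      (∀ j, IsFP (F.obj j)) ∧ Nonempty (IsColimit c) ∧ Nonempty (c.pt ≅ X)

/-- A functor is finitary if it preserves filtered colimits. -/
def IsFinitary (H : C ⥤ C) : Prop :=
  ∀ (J : Type v) [SmallCategory J] [IsFiltered J], Nonempty (PreservesColimitsOfShape J H)

/-- An object is a strict initial object if it is initial and every morphism into it
is an isomorphism. -/
def IsStrictInitial (X : C) : Prop :=
  Nonempty (IsInitial X) ∧ ∀ (Y : C) (f : Y ⟶ X), IsIso f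

/-- A monomorphism is non-empty if its domain is not a strict initial object;
a functor preserves non-empty monos if it maps them to monos. -/
def PreservesNonemptyMonos (H : C ⥤ C) : Prop :=
  ∀ ⦃X Y : C⦄ (m : X ⟶ Y), Mono m → ¬ IsStrictInitial X → Mono (H.map m)

/-- A coalgebra is locally finitely generated (lfg) if every morphism from a finitely
generated object into its carrier factors through a coalgebra homomorphism from a
coalgebra with finitely generated carrier. -/
def IsLFGCoalgebra (H : C ⥤ C) (X : Endofunctor.Coalgebra H) : Prop :=
  ∀ (S : C), IsFG S → ∀ f : S ⟶ X.V,
    ∃ (P : Endofunctor.Coalgebra H) (h : P ⟶ X) (f' : S ⟶ P.V),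
      IsFG P.V ∧ f' ≫ h.f = f

/-- An algebra is fg-iterative if every flat equation morphism `e : X ⟶ HX + A` with
`X` finitely generated has a unique solution. -/
def IsFGIterative [HasBinaryCoproducts C] (H : C ⥤ C) (A : Endofunctor.Algebra H) : Prop :=
  ∀ (X : C), IsFG X → ∀ e : X ⟶ (H.obj X ⨿ A.a),
    ∃! s : X ⟶ A.a,
      s = e ≫ coprod.map (H.map s) (𝟙 A.a) ≫ coprod.desc A.str (𝟙 A.a)

end LFF

/-!
Write the carrier of `X` as a filtered colimit of finitely presentable objects `Aⱼ`; as `X` is lfg,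
each leg `Aⱼ → X` factors through a coalgebra `Pⱼ` with fg carrier. For a finite set `T` of
indices, the image of `∐_{j ∈ T} Pⱼ → X → Y` is a subcoalgebra of `Y`: its structure map is a
diagonal fill-in against `H` of the image mono, which `H` keeps mono unless the image is strict
initial, and then the strong epi onto the image is invertible. The image is fg as a strong quotient
of a finite coproduct of fg objects. These images form a directed family of subobjects of `Y`
through whose union the strong epi `q` factors, so the union is `Y`, and any map from the fg object
`S` into `Y` factors through one member.

Images exist in any lfp category: coequalize all pairs of maps from a small mono-detecting family
of finitely presentable objects that the given map identifies, and iterate `ω` times. A map from a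
finitely presentable object into the colimit factors through a finite stage, and the next step
identifies whatever the induced map to the codomain identifies.
-/

open CategoryTheory CategoryTheory.Limits

namespace LFF

variable {C : Type u} [Category.{v} C]

section Presentability

theorem IsFP.isFG {A : C} (hA : IsFP A) : IsFG A :=
  fun J _ _ F _ c hc => hA J F c hc

variable {J : Type v} [SmallCategory J] [IsFiltered J] {F : J ⥤ C} {c : Cocone F}

theorem IsFP.exists_lift {A : C} (hA : IsFP A) (hc : IsColimit c) (a : A ⟶ c.pt) :
    ∃ (j : J) (g : A ⟶ F.obj j), g ≫ c.ι.app j = a :=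
  Types.jointly_surjective_of_isColimit (hA J F c ⟨hc⟩).some a

theorem IsFP.exists_lift₂ {A : C} (hA : IsFP A) (hc : IsColimit c) (a b : A ⟶ c.pt) :
    ∃ (j : J) (a' b' : A ⟶ F.obj j), a' ≫ c.ι.app j = a ∧ b' ≫ c.ι.app j = b :=
  Types.FilteredColimit.jointly_surjective_of_isColimit₂ (hA J F c ⟨hc⟩).some a b

theorem IsFP.exists_map_eq {A : C} (hA : IsFP A) (hc : IsColimit c) {j : J}
    (a b : A ⟶ F.obj j) (h : a ≫ c.ι.app j = b ≫ c.ι.app j) :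
    ∃ (k : J) (f : j ⟶ k), a ≫ F.map f = b ≫ F.map f :=
  (Types.FilteredColimit.isColimit_eq_iff' (hA J F c ⟨hc⟩).some a b).mp h

theorem IsFG.exists_lift {A : C} (hA : IsFG A) (hF : ∀ ⦃i j : J⦄ (f : i ⟶ j), Mono (F.map f))
    (hc : IsColimit c) (a : A ⟶ c.pt) : ∃ (j : J) (g : A ⟶ F.obj j), g ≫ c.ι.app j = a :=
  Types.jointly_surjective_of_isColimit (hA J F hF c ⟨hc⟩).some a

end Presentability

theorem IsFP.exists_lift₂_of_nat {A : C} (hA : IsFP A) {F : ℕ ⥤ C} {c : Cocone F}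
    (hc : IsColimit c) (a b : A ⟶ c.pt) :
    ∃ (n : ℕ) (a' b' : A ⟶ F.obj n), a' ≫ c.ι.app n = a ∧ b' ≫ c.ι.app n = b := by
  -- `IsFP` only speaks about index categories in `Type v`.
  obtain ⟨⟨n⟩, a', b', ha, hb⟩ :=
    hA.exists_lift₂ (hc.whiskerEquivalence ULift.orderIso.{v}.equivalence) a b
  exact ⟨n, a', b', ha, hb⟩

namespace IsLFP

theorem hom_ext (hC : IsLFP C) {W Z : C} {u v : W ⟶ Z}
    (h : ∀ A, IsFP A → ∀ a : A ⟶ W, a ≫ u = a ≫ v) : u = v := by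
  obtain ⟨J, _, _, F, c, hF, ⟨hc⟩, ⟨ψ⟩⟩ := hC.2.2 W
  rw [← cancel_epi ψ.hom]
  exact hc.hom_ext fun j => by simpa using h _ (hF j) (c.ι.app j ≫ ψ.hom)

theorem mono_of_cancel_fp (hC : IsLFP C) {M N : C} (m : M ⟶ N)
    (h : ∀ A, IsFP A → ∀ a b : A ⟶ M, a ≫ m = b ≫ m → a = b) : Mono m :=
  ⟨fun u v huv => hC.hom_ext fun A hA a => h A hA _ _ (by simp only [Category.assoc, huv])⟩

theorem exists_small_family_detecting_monos (hC : IsLFP C) :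
    ∃ (ι : Type v) (G : ι → C), (∀ i, IsFP (G i)) ∧
      ∀ ⦃M N : C⦄ (m : M ⟶ N), (∀ i (a b : G i ⟶ M), a ≫ m = b ≫ m → a = b) → Mono m := by
  have := hC.2.1
  let E := equivSmallModel (ObjectProperty.FullSubcategory fun X : C => IsFP X)
  refine ⟨_, fun s => (E.inverse.obj s).obj, fun s => (E.inverse.obj s).property,
    fun M N m h => hC.mono_of_cancel_fp m fun A hA a b hab => ?_⟩
  let φ : (E.inverse.obj (E.functor.obj ⟨A, hA⟩)).obj ≅ A :=
    (ObjectProperty.ι _).mapIso (E.unitIso.app ⟨A, hA⟩).symm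
  rw [← cancel_epi φ.hom]
  exact h _ _ _ (by simp only [Category.assoc, hab])

variable {J : Type v} [SmallCategory J] [IsFiltered J] {F : J ⥤ C} {c : Cocone F}

theorem mono_ι (hC : IsLFP C) (hF : ∀ ⦃i j : J⦄ (f : i ⟶ j), Mono (F.map f))
    (hc : IsColimit c) (j : J) : Mono (c.ι.app j) :=
  hC.mono_of_cancel_fp _ fun _ hA a b hab => by
    obtain ⟨k, f, hf⟩ := hA.exists_map_eq hc a b hab
    have := hF f
    exact (cancel_mono (F.map f)).mp hf

theorem mono_desc (hC : IsLFP C) (hc : IsColimit c) (d : Cocone F) [∀ j, Mono (d.ι.app j)] :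
    Mono (hc.desc d) :=
  hC.mono_of_cancel_fp _ fun _ hA a b hab => by
    obtain ⟨j, a', b', rfl, rfl⟩ := hA.exists_lift₂ hc a b
    simp only [Category.assoc, hc.fac, cancel_mono] at hab
    rw [hab]

theorem exists_lift_of_mono (hC : IsLFP C) {W Z U : C} (p : W ⟶ Z) (n : U ⟶ Z) [Mono n]
    (h : ∀ A, IsFP A → ∀ a : A ⟶ W, ∃ b : A ⟶ U, b ≫ n = a ≫ p) :
    ∃ r : W ⟶ U, r ≫ n = p := by
  obtain ⟨J, _, _, F, c, hF, ⟨hc⟩, ⟨ψ⟩⟩ := hC.2.2 W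
  choose b hb using fun j => h _ (hF j) (c.ι.app j ≫ ψ.hom)
  let d : Cocone F :=
    { pt := U
      ι := { app := b, naturality := fun j j' f => by rw [← cancel_mono n]; simp [hb] } }
  refine ⟨ψ.inv ≫ hc.desc d, ?_⟩
  rw [← cancel_epi ψ.hom]
  exact hc.hom_ext fun j => by simp [d, hb]

theorem isFG_of_exists_lift (hC : IsLFP C) {A : C}
    (h : ∀ (J : Type v) [SmallCategory J] [IsFiltered J] (F : J ⥤ C),
      (∀ ⦃i j : J⦄ (f : i ⟶ j), Mono (F.map f)) → ∀ (c : Cocone F), IsColimit c →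
        ∀ a : A ⟶ c.pt, ∃ (j : J) (g : A ⟶ F.obj j), g ≫ c.ι.app j = a) :
    IsFG A := by
  intro J _ _ F hF c ⟨hc⟩
  refine ⟨Types.FilteredColimit.isColimitOf _ _ (fun a => ?_) fun i j a b hab => ?_⟩
  · obtain ⟨j, g, hg⟩ := h J F hF c hc a
    exact ⟨j, g, hg.symm⟩
  · have := hC.mono_ι hF hc (IsFiltered.max i j)
    refine ⟨_, IsFiltered.leftToMax i j, IsFiltered.rightToMax i j, ?_⟩
    change a ≫ _ = b ≫ _
    rw [← cancel_mono (c.ι.app _)]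
    simpa using hab

theorem isFG_of_strongEpi (hC : IsLFP C) {A B : C} (hA : IsFG A) (e : A ⟶ B) [StrongEpi e] :
    IsFG B :=
  hC.isFG_of_exists_lift fun _ _ _ _ hF _ hc x => by
    obtain ⟨j, y, hy⟩ := hA.exists_lift hF hc (e ≫ x)
    have := hC.mono_ι hF hc j
    let sq : CommSq y e (_) x := ⟨hy⟩
    exact ⟨j, sq.lift, sq.fac_right⟩

theorem isFG_sigma (hC : IsLFP C) {ι : Type*} [Finite ι] (A : ι → C) [HasCoproduct A]
    (hA : ∀ i, IsFG (A i)) : IsFG (∐ A) :=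
  hC.isFG_of_exists_lift fun _ _ _ F hF _ hc x => by
    choose j g hg using fun i => (hA i).exists_lift hF hc (Sigma.ι A i ≫ x)
    obtain ⟨k, hk⟩ := IsFiltered.sup_objs_exists (Set.finite_range j).toFinset
    let t i : j i ⟶ k := (hk (by simp)).some
    exact ⟨k, Sigma.desc fun i => g i ≫ F.map (t i), Sigma.hom_ext _ _ fun i => by simp [hg]⟩

end IsLFP

theorem strongEpi_ι_zero_of_nat {F : ℕ ⥤ C}
    (hF : ∀ n : ℕ, StrongEpi (F.map (homOfLE n.le_succ))) {c : Cocone F} (hc : IsColimit c) :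
    StrongEpi (c.ι.app 0) := by
  refine ⟨⟨fun g h hgh => hc.hom_ext fun n => ?_⟩, fun _ _ z hz => ?_⟩
  · induction n with
    | zero => exact hgh
    | succ n ih =>
      rw [← cancel_epi (F.map (homOfLE n.le_succ))]
      simpa using ih
  · let t : (MorphismProperty.monomorphisms C).llp.TransfiniteCompositionOfShape ℕ (c.ι.app 0) :=
      { F := F
        isoBot := Iso.refl _
        incl := c.ι
        isColimit := hc
        fac := Category.id_comp _
        map_mem := fun n _ _ _ z (_ : Mono z) => (hF n).llp z }
    exact MorphismProperty.transfiniteCompositionsOfShape_le _ ℕ _ ⟨t⟩ z hz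

theorem eq_of_comp_eq_of_succ_merges {ι : Type v} {G : ι → C} (hG : ∀ i, IsFP (G i))
    {F : ℕ ⥤ C} {c : Cocone F} (hc : IsColimit c) {Z : C} (m : c.pt ⟶ Z)
    (hF : ∀ n i (a b : G i ⟶ F.obj n), a ≫ c.ι.app n ≫ m = b ≫ c.ι.app n ≫ m →
      a ≫ F.map (homOfLE n.le_succ) = b ≫ F.map (homOfLE n.le_succ))
    (i : ι) (a b : G i ⟶ c.pt) (h : a ≫ m = b ≫ m) : a = b := by
  obtain ⟨n, a', b', rfl, rfl⟩ := (hG i).exists_lift₂_of_nat hc a b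
  rw [← c.w (homOfLE n.le_succ), reassoc_of% hF n i a' b' (by simpa using h)]

section Merging

variable {ι : Type v} (G : ι → C) {Z : C}

def MergedPairs (k : Over Z) : Type v :=
  Σ i, {p : (G i ⟶ k.left) × (G i ⟶ k.left) // p.1 ≫ k.hom = p.2 ≫ k.hom}

variable [HasColimits C]

noncomputable def MergedPairs.fst (k : Over Z) :
    (∐ fun r : MergedPairs G k => G r.1) ⟶ k.left :=
  Sigma.desc fun r => r.2.1.1

noncomputable def MergedPairs.snd (k : Over Z) :
    (∐ fun r : MergedPairs G k => G r.1) ⟶ k.left :=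
  Sigma.desc fun r => r.2.1.2

theorem MergedPairs.fst_comp_hom (k : Over Z) :
    MergedPairs.fst G k ≫ k.hom = MergedPairs.snd G k ≫ k.hom :=
  Sigma.hom_ext _ _ fun r => by simpa [MergedPairs.fst, MergedPairs.snd] using r.2.2

noncomputable def mergeStep (k : Over Z) : Over Z :=
  Over.mk (coequalizer.desc k.hom (MergedPairs.fst_comp_hom G k))

noncomputable def toMergeStep (k : Over Z) : k ⟶ mergeStep G k :=
  Over.homMk (coequalizer.π _ _) (coequalizer.π_desc _ _)

instance (k : Over Z) : StrongEpi (toMergeStep G k).left := by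
  change StrongEpi (coequalizer.π _ _)
  infer_instance

theorem toMergeStep_left_eq (k : Over Z) {i : ι} (a b : G i ⟶ k.left)
    (h : a ≫ k.hom = b ≫ k.hom) : a ≫ (toMergeStep G k).left = b ≫ (toMergeStep G k).left := by
  have := Sigma.ι (fun r : MergedPairs G k => G r.1) ⟨i, (a, b), h⟩ ≫=
    coequalizer.condition (MergedPairs.fst G k) (MergedPairs.snd G k)
  change a ≫ coequalizer.π _ _ = b ≫ coequalizer.π _ _
  simpa [MergedPairs.fst, MergedPairs.snd] using this

noncomputable def mergeIter (k : Over Z) : ℕ → Over Z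
  | 0 => k
  | n + 1 => mergeStep G (mergeIter k n)

noncomputable def mergeSeq (k : Over Z) : ℕ ⥤ Over Z :=
  Functor.ofSequence fun n => toMergeStep G (mergeIter G k n)

theorem mergeSeq_map_succ (k : Over Z) (n : ℕ) :
    (mergeSeq G k).map (homOfLE n.le_succ) = toMergeStep G (mergeIter G k n) :=
  Functor.ofSequence_map_homOfLE_succ _ n

theorem nonempty_strongEpiMonoFactorisation (hG : ∀ i, IsFP (G i))
    (hdet : ∀ ⦃M N : C⦄ (m : M ⟶ N), (∀ i (a b : G i ⟶ M), a ≫ m = b ≫ m → a = b) → Mono m)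
    {A : C} (f : A ⟶ Z) : Nonempty (StrongEpiMonoFactorisation f) := by
  let F := mergeSeq G (Over.mk f)
  let c := (Over.forget Z).mapCocone (colimit.cocone F)
  have hc : IsColimit c := isColimitOfPreserves _ (colimit.isColimit F)
  have : StrongEpi (c.ι.app 0) := strongEpi_ι_zero_of_nat (fun n => by
    rw [Functor.comp_map, mergeSeq_map_succ]
    change StrongEpi (toMergeStep G _).left
    infer_instance) hc
  refine ⟨@StrongEpiMonoFactorisation.mk _ _ _ _ _
    { I := (colimit F).left, m := (colimit F).hom, e := c.ι.app 0, fac := Over.w _, m_mono := ?_ }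
    this⟩
  refine hdet _ (eq_of_comp_eq_of_succ_merges hG hc _ fun n i a b h => ?_)
  have hw : c.ι.app n ≫ (colimit F).hom = (F.obj n).hom := Over.w (colimit.ι F n)
  rw [hw] at h
  rw [Functor.comp_map, mergeSeq_map_succ]
  exact toMergeStep_left_eq G _ a b h

end Merging

theorem IsLFP.hasStrongEpiMonoFactorisations (hC : IsLFP C) :
    HasStrongEpiMonoFactorisations C :=
  have := hC.1
  let ⟨_, G, hG, hdet⟩ := hC.exists_small_family_detecting_monos
  ⟨fun f => nonempty_strongEpiMonoFactorisation G hG hdet f⟩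

instance strongEpi_factorThruImageSubobject [HasStrongEpiMonoFactorisations C] {A B : C}
    (f : A ⟶ B) : StrongEpi (factorThruImageSubobject f) := by
  unfold factorThruImageSubobject
  infer_instance

theorem IsLFP.exists_lift_of_directed_cover (hC : IsLFP C) {T : Type v} [Preorder T]
    [IsDirected T (· ≤ ·)] [Nonempty T] {Z W : C} {s : T → Subobject Z} (hs : Monotone s)
    (p : W ⟶ Z) [StrongEpi p]
    (hp : ∀ A, IsFP A → ∀ a : A ⟶ W, ∃ (t : T) (b : A ⟶ s t), b ≫ (s t).arrow = a ≫ p)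
    {S : C} (hS : IsFG S) (f : S ⟶ Z) : ∃ (t : T) (g : S ⟶ s t), g ≫ (s t).arrow = f := by
  have := hC.1
  let D := hs.functor ⋙ Subobject.underlying
  let d : Cocone D :=
    { pt := Z
      ι :=
        { app := fun t => (s t).arrow
          naturality := fun _ _ φ => by
            simpa [D] using Subobject.underlying_arrow (hs.functor.map φ) } }
  have hD : ∀ ⦃t t' : T⦄ (φ : t ⟶ t'), Mono (D.map φ) := fun _ _ φ =>
    mono_of_mono_fac (Subobject.underlying_arrow (hs.functor.map φ))
  have : ∀ t, Mono (d.ι.app t) := fun t => inferInstanceAs (Mono (s t).arrow)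
  have : Mono ((colimit.isColimit D).desc d) := hC.mono_desc _ d
  obtain ⟨r, hr⟩ := hC.exists_lift_of_mono p ((colimit.isColimit D).desc d) fun A hA a => by
    obtain ⟨t, b, hb⟩ := hp A hA a
    exact ⟨b ≫ colimit.ι D t, (Category.assoc _ _ _).trans
      ((congrArg (b ≫ ·) ((colimit.isColimit D).fac d t)).trans hb)⟩
  have : StrongEpi (r ≫ (colimit.isColimit D).desc d) := hr ▸ ‹StrongEpi p›
  have := strongEpi_of_strongEpi r ((colimit.isColimit D).desc d)
  have := isIso_of_mono_of_strongEpi ((colimit.isColimit D).desc d)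
  obtain ⟨hd⟩ := hS T D hD d ⟨IsColimit.ofPointIso (colimit.isColimit D)⟩
  exact Types.jointly_surjective_of_isColimit hd f

section Coalgebra

variable {H : C ⥤ C}

-- Reducible, so that its carrier is syntactically a coproduct for `simp` and `rw`.
noncomputable abbrev sigmaCoalgebra {ι : Type*} (P : ι → Endofunctor.Coalgebra H)
    [HasCoproduct fun i => (P i).V] : Endofunctor.Coalgebra H where
  V := ∐ fun i => (P i).V
  str := Sigma.desc fun i => (P i).str ≫ H.map (Sigma.ι (fun i => (P i).V) i)

noncomputable def sigmaCoalgebraDesc {ι : Type*} {P : ι → Endofunctor.Coalgebra H}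
    [HasCoproduct fun i => (P i).V] {Y : Endofunctor.Coalgebra H} (h : ∀ i, P i ⟶ Y) :
    sigmaCoalgebra P ⟶ Y where
  f := Sigma.desc fun i => (h i).f
  h := Sigma.hom_ext _ _ fun i => by simp [← H.map_comp]

theorem exists_str_of_strongEpi_mono (hH : PreservesNonemptyMonos H)
    {P Y : Endofunctor.Coalgebra H} (h : P ⟶ Y) {Q : C} (e : P.V ⟶ Q) (m : Q ⟶ Y.V)
    [StrongEpi e] [Mono m] (he : e ≫ m = h.f) :
    ∃ str : Q ⟶ H.obj Q, str ≫ H.map m = m ≫ Y.str := by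
  by_cases hQ : IsStrictInitial Q
  · have := hQ.2 _ e
    refine ⟨inv e ≫ P.str ≫ H.map e, ?_⟩
    simp only [Category.assoc, ← H.map_comp, he, h.h]
    simp [← he]
  · have := hH m ‹_› hQ
    let sq : CommSq (P.str ≫ H.map e) e (H.map m) (m ≫ Y.str) :=
      ⟨by simp only [Category.assoc, ← H.map_comp, he, h.h, reassoc_of% he]⟩
    exact ⟨sq.lift, sq.fac_right⟩

end Coalgebra

end LFF

open LFF in
theorem stmt12_general {C : Type u} [Category.{v} C] (hC : IsLFP C)
    (H : C ⥤ C) (hm : PreservesNonemptyMonos H)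
    (X Y : Endofunctor.Coalgebra H) (q : X ⟶ Y) (hq : StrongEpi q.f)
    (hX : IsLFGCoalgebra H X) : IsLFGCoalgebra H Y := by
  have := hC.1
  have := hC.hasStrongEpiMonoFactorisations
  intro S hS f
  obtain ⟨J, _, _, F, c, hF, ⟨hc⟩, ⟨ψ⟩⟩ := hC.2.2 X.V
  choose P h fP hP hfP using fun j => hX (F.obj j) (hF j).isFG (c.ι.app j ≫ ψ.hom)
  let k (T : Finset J) : sigmaCoalgebra (fun j : T => P j) ⟶ Y :=
    sigmaCoalgebraDesc fun j => h j ≫ q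
  have hk : Monotone fun T => imageSubobject (k T).f := fun T T' hTT' =>
    imageSubobject_le _ (Sigma.desc (fun j : T => Sigma.ι (fun j : T' => (P j).V) ⟨j, hTT' j.2⟩)
      ≫ factorThruImageSubobject (k T').f) (Sigma.hom_ext _ _ fun j => by
        rw [Category.assoc, imageSubobject_arrow_comp]; simp [k, sigmaCoalgebraDesc])
  have hcover (A : C) (hA : IsFP A) (a : A ⟶ X.V) : ∃ (T : Finset J)
      (b : A ⟶ imageSubobject (k T).f), b ≫ (imageSubobject (k T).f).arrow = a ≫ q.f := by
    obtain ⟨j, a', ha'⟩ := hA.exists_lift hc (a ≫ ψ.inv)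
    refine ⟨{j}, a' ≫ fP j ≫ Sigma.ι (fun i : ({j} : Finset J) => (P i).V) ⟨j, by simp⟩ ≫
      factorThruImageSubobject _, ?_⟩
    rw [Category.assoc, Category.assoc, Category.assoc, imageSubobject_arrow_comp]
    simp [k, sigmaCoalgebraDesc, reassoc_of% hfP, reassoc_of% ha']
  obtain ⟨T, g, hg⟩ := hC.exists_lift_of_directed_cover hk q.f hcover hS f
  obtain ⟨str, hstr⟩ := exists_str_of_strongEpi_mono hm (k T) _ _ (imageSubobject_arrow_comp _)
  have hfg : IsFG (∐ fun j : T => (P j).V) := hC.isFG_sigma _ fun j => hP j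
  exact ⟨⟨_, str⟩, ⟨_, hstr⟩, g, hC.isFG_of_strongEpi hfg (factorThruImageSubobject _), hg⟩

open LFF in
/-- Lfg coalgebras are closed under strong-epi-carried quotients. -/
theorem stmt12 {C : Type u} [Category.{v} C] (hC : IsLFP C)
    (H : C ⥤ C) (hfin : IsFinitary H) (hm : PreservesNonemptyMonos H)
    (X Y : Endofunctor.Coalgebra H) (q : X ⟶ Y) (hq : StrongEpi q.f)
    (hX : IsLFGCoalgebra H X) : IsLFGCoalgebra H Y :=
  stmt12_general hC H hm X Y q hq hX
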